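/- arXiv:2010.04538 — 2 statements merged into one kernel-verified Lean document; each statement's English description precedes it below -/
import Mathlib

section
/- Let K be a p×q complex matrix and e an index in Fin q. Then the following are equivalent: (1) every vector δ in the kernel of K has δ_e = 0; (2) the e-th standard basis vector e_e is orthogonal to ker K (i.e., ⟨δ, e_e⟩ = 0 for all δ ∈ ker K); (3) the e-th column of K does not lie in the span of the other columns, equivalently rank K = rank K' + 1 where K' is K with the e-th column removed. -/
/-!
Since `K *ᵥ δ = ∑ j, δ j • K.col j`, a kernel vector with `δ e ≠ 0` is the same as a linear
relation expressing column `e` through the other columns. Adjoining a vector to a subspace raises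
its dimension by one exactly when the vector is not already in it.
-/

open Matrix Submodule

section

variable {R M ι : Type*} [DivisionRing R] [AddCommGroup M] [Module R M] [Fintype ι] [DecidableEq ι]

theorem forall_sum_smul_eq_zero_imp_eq_zero_iff_notMem_span (v : ι → M) (e : ι) :
    (∀ c : ι → R, ∑ i, c i • v i = 0 → c e = 0) ↔
      v e ∉ span R (Set.range fun j : {j // j ≠ e} => v j) := by
  simp only [Fintype.sum_eq_add_sum_subtype_ne _ e, mem_span_range_iff_exists_fun]
  constructor
  · rintro h ⟨d, hd⟩
    have hne (j : {j // j ≠ e}) : (j : ι) ≠ e := j.2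
    have := h (fun i => if hi : i = e then -1 else d ⟨i, hi⟩)
    simp [hne, hd] at this
  · intro h c hc
    by_contra hce
    refine h ⟨fun j => -(c e)⁻¹ * c j, ?_⟩
    simp only [mul_smul, ← Finset.smul_sum, eq_neg_of_add_eq_zero_right hc]
    simp [hce]

end

theorem Submodule.finrank_sup_span_singleton_eq_add_one_iff {K V : Type*} [DivisionRing K]
    [AddCommGroup V] [Module K V] [Module.Finite K V] {p : Submodule K V} {v : V} :
    Module.finrank K ↥(p ⊔ span K {v}) = Module.finrank K p + 1 ↔ v ∉ p := by
  refine ⟨fun h hv => ?_, finrank_sup_span_singleton⟩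
  rw [sup_eq_left.mpr ((span_singleton_le_iff_mem v p).mpr hv)] at h
  omega

theorem star_dotProduct_single_one_eq_zero_iff {R n : Type*} [NonAssocSemiring R] [StarRing R]
    [Fintype n] [DecidableEq n] (δ : n → R) (e : n) :
    star δ ⬝ᵥ Pi.single e 1 = 0 ↔ δ e = 0 := by
  simp [dotProduct_single]

namespace Matrix

variable {R m n : Type*} [Field R] [Fintype n] [DecidableEq n]

theorem forall_mulVec_eq_zero_imp_apply_eq_zero_iff (K : Matrix m n R) (e : n) :
    (∀ δ : n → R, K *ᵥ δ = 0 → δ e = 0) ↔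
      K.col e ∉ span R (Set.range fun j : {j // j ≠ e} => K.col j) := by
  simp only [← forall_sum_smul_eq_zero_imp_eq_zero_iff_notMem_span, mulVec_eq_sum, op_smul_eq_smul]
  rfl

theorem rank_eq_rank_submatrix_ne_add_one_iff [Fintype m] (K : Matrix m n R) (e : n) :
    K.rank = (K.submatrix id fun j : {j // j ≠ e} => (j : n)).rank + 1 ↔
      K.col e ∉ span R (Set.range fun j : {j // j ≠ e} => K.col j) := by
  rw [rank_eq_finrank_span_cols, rank_eq_finrank_span_cols, ← Set.insert_image_compl_eq_range,
    Set.image_eq_range, span_insert, sup_comm]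
  exact finrank_sup_span_singleton_eq_add_one_iff

end Matrix

/-- Equivalent characterizations of "every kernel vector of `K` has zero `e`-th entry":
orthogonality of the kernel to the `e`-th standard basis vector, the `e`-th column not
lying in the span of the other columns, and the rank condition `rank K = rank K' + 1`. -/
theorem stmt4 {p q : ℕ} (K : Matrix (Fin p) (Fin q) ℂ) (e : Fin q) :
    ((∀ δ : Fin q → ℂ, K.mulVec δ = 0 → δ e = 0) ↔
      (∀ δ : Fin q → ℂ, K.mulVec δ = 0 → star δ ⬝ᵥ (Pi.single e 1 : Fin q → ℂ) = 0)) ∧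
    ((∀ δ : Fin q → ℂ, K.mulVec δ = 0 → δ e = 0) ↔
      (fun i => K i e) ∉
        Submodule.span ℂ (Set.range fun j : {j : Fin q // j ≠ e} => fun i => K i (j : Fin q))) ∧
    ((∀ δ : Fin q → ℂ, K.mulVec δ = 0 → δ e = 0) ↔
      K.rank = (K.submatrix id (fun j : {j : Fin q // j ≠ e} => (j : Fin q))).rank + 1) := by
  have hker := K.forall_mulVec_eq_zero_imp_apply_eq_zero_iff e
  refine ⟨forall_congr' fun δ => imp_congr_right fun _ => ?_, hker,
    hker.trans (K.rank_eq_rank_submatrix_ne_add_one_iff e).symm⟩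
  exact (star_dotProduct_single_one_eq_zero_iff δ e).symm
end

section
/- Let A : ℂ^N → Matrix (Fin p) (Fin q) ℂ have entries that are analytic functions on a connected open set U ⊆ ℂ^N, and let r be the maximum of rank A(x) over x ∈ U. Then the set {x ∈ U | rank A(x) < r} is closed in U and has empty interior (i.e., the generic rank r is attained on an open dense subset of U). -/
/-!
The rank of a matrix is `< r` exactly when all its `r × r` minors vanish. The minors of `A x`
are polynomials in the entries, hence continuous, which makes the rank-drop set closed, and
analytic: if the rank dropped on an open set, every `r × r` minor would vanish on all of the
connected set `U` by the identity theorem, contradicting a point of rank `r`.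
-/

open Matrix Filter Topology

theorem exists_linearIndependent_comp_of_le_finrank_span {K V ι : Type*} [DivisionRing K]
    [AddCommGroup V] [Module K V] [Finite ι] {r : ℕ} (v : ι → V)
    (h : r ≤ Module.finrank K (Submodule.span K (Set.range v))) :
    ∃ g : Fin r → ι, LinearIndependent K (v ∘ g) := by
  obtain ⟨κ, a, ha, hspan, hli⟩ := exists_linearIndependent' K v
  have : Finite κ := Finite.of_injective a ha
  have : Fintype κ := Fintype.ofFinite κ
  have hcard : r ≤ Fintype.card κ := by
    rwa [linearIndependent_iff_card_eq_finrank_span.mp hli, Set.finrank, hspan]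
  let e : Fin r ↪ κ := (Fin.castLEEmb hcard).trans (Fintype.equivFin κ).symm.toEmbedding
  exact ⟨a ∘ e, hli.comp e e.injective⟩

namespace Matrix

theorem le_rank_of_det_submatrix_ne_zero {m n K : Type*} [Fintype n] [Field K] {r : ℕ}
    (M : Matrix m n K) {f : Fin r → m} {g : Fin r → n} (h : (M.submatrix f g).det ≠ 0) :
    r ≤ M.rank := by
  have hunit : IsUnit (M.submatrix f g) := (isUnit_iff_isUnit_det _).2 h.isUnit
  simpa [rank_of_isUnit _ hunit] using M.rank_submatrix_le f g

theorem analyticOnNhd_det {𝕜 E A n : Type*} [NontriviallyNormedField 𝕜] [NormedAddCommGroup E]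
    [NormedSpace 𝕜 E] [NormedCommRing A] [NormedAlgebra 𝕜 A] [Fintype n] [DecidableEq n]
    {M : E → Matrix n n A} {s : Set E} (hM : ∀ i j, AnalyticOnNhd 𝕜 (fun x => M x i j) s) :
    AnalyticOnNhd 𝕜 (fun x => (M x).det) s := by
  have hexp : (fun x => (M x).det) =
      ∑ σ : Equiv.Perm n, fun x => ((Equiv.Perm.sign σ : ℤ) : A) * ∏ i, M x (σ i) i := by
    ext x
    simp only [det_apply, Units.smul_def, zsmul_eq_mul, Finset.sum_apply]
  rw [hexp]
  exact Finset.analyticOnNhd_sum _ fun σ _ =>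
    analyticOnNhd_const.mul (Finset.analyticOnNhd_fun_prod _ fun i _ => hM (σ i) i)

variable {m n K : Type*} [Fintype m] [Fintype n] [Field K]

theorem exists_det_submatrix_ne_zero_of_le_rank {r : ℕ} (M : Matrix m n K) (h : r ≤ M.rank) :
    ∃ (f : Fin r → m) (g : Fin r → n), (M.submatrix f g).det ≠ 0 := by
  rw [rank_eq_finrank_span_cols] at h
  obtain ⟨g, hg⟩ := exists_linearIndependent_comp_of_le_finrank_span M.col h
  have hMg : (M.submatrix id g).rank = r := by
    rw [← rank_transpose]
    simpa using (show LinearIndependent K (M.submatrix id g)ᵀ.row from hg).rank_matrix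
  rw [rank_eq_finrank_span_row] at hMg
  obtain ⟨f, hf⟩ :=
    exists_linearIndependent_comp_of_le_finrank_span (M.submatrix id g).row hMg.ge
  refine ⟨f, g, ?_⟩
  exact (isUnit_iff_isUnit_det _).1 (linearIndependent_rows_iff_isUnit.1 hf) |>.ne_zero

theorem rank_lt_iff_forall_det_submatrix_eq_zero {r : ℕ} (M : Matrix m n K) :
    M.rank < r ↔ ∀ (f : Fin r → m) (g : Fin r → n), (M.submatrix f g).det = 0 := by
  refine ⟨fun h f g => ?_, fun h => ?_⟩
  · by_contra hne
    exact (M.le_rank_of_det_submatrix_ne_zero hne).not_gt h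
  · by_contra! hle
    obtain ⟨f, g, hne⟩ := M.exists_det_submatrix_ne_zero_of_le_rank hle
    exact hne (h f g)


theorem isClosed_setOf_rank_lt {X : Type*} [TopologicalSpace X] [TopologicalSpace K]
    [IsTopologicalRing K] [T2Space K] {A : X → Matrix m n K} (hA : Continuous A) (r : ℕ) :
    IsClosed {x | (A x).rank < r} := by
  simp_rw [rank_lt_iff_forall_det_submatrix_eq_zero, Set.ofPred_forall]
  exact isClosed_iInter fun f => isClosed_iInter fun g =>
    isClosed_eq (hA.matrix_submatrix f g).matrix_det continuous_const

theorem rank_lt_of_isPreconnected_of_eventually_rank_lt {𝕜 E : Type*}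
    [NontriviallyNormedField 𝕜] [NormedAddCommGroup E] [NormedSpace 𝕜 E]
    {A : E → Matrix m n 𝕜} {U : Set E} (hA : ∀ i j, AnalyticOnNhd 𝕜 (fun x => A x i j) U)
    (hU : IsPreconnected U) {x₀ : E} (hx₀ : x₀ ∈ U) {r : ℕ}
    (h : ∀ᶠ x in 𝓝 x₀, (A x).rank < r) {x : E} (hx : x ∈ U) :
    (A x).rank < r := by
  classical
  refine (A x).rank_lt_iff_forall_det_submatrix_eq_zero.2 fun f g => ?_
  have hminor : AnalyticOnNhd 𝕜 (fun y => ((A y).submatrix f g).det) U :=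
    analyticOnNhd_det fun i j => hA (f i) (g j)
  refine hminor.eqOn_zero_of_preconnected_of_eventuallyEq_zero hU hx₀ ?_ hx
  filter_upwards [h] with y hy
  exact (A y).rank_lt_iff_forall_det_submatrix_eq_zero.1 hy f g

end Matrix

theorem stmt9_general {N p q : ℕ} (A : (Fin N → ℂ) → Matrix (Fin p) (Fin q) ℂ)
    (U : Set (Fin N → ℂ)) (hUc : IsConnected U)
    (hA : ∀ i j, AnalyticOnNhd ℂ (fun x => A x i j) U)
    (r : ℕ) (hmax : ∃ x ∈ U, (A x).rank = r) :
    IsClosed ((Subtype.val ⁻¹' {x | (A x).rank < r}) : Set U) ∧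
    interior {x | x ∈ U ∧ (A x).rank < r} = ∅ := by
  constructor
  · have hcont : Continuous fun x : U => A x :=
      continuous_pi fun i => continuous_pi fun j => (hA i j).continuousOn.domRestrict
    exact isClosed_setOf_rank_lt hcont r
  · refine Set.eq_empty_iff_forall_notMem.2 fun x₀ hx₀ => ?_
    obtain ⟨y, hyU, rfl⟩ := hmax
    have hdrop : ∀ᶠ x in 𝓝 x₀, (A x).rank < (A y).rank :=
      Filter.mem_of_superset (mem_interior_iff_mem_nhds.1 hx₀) fun x hx => hx.2
    exact (rank_lt_of_isPreconnected_of_eventually_rank_lt hA hUc.isPreconnected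
      (interior_subset hx₀).1 hdrop hyU).false

/-- For an entrywise-analytic matrix function `A` on a connected open `U ⊆ ℂ^N` whose
rank attains its maximum `r` on `U`, the set where the rank drops below `r` is closed
in `U` and has empty interior. -/
theorem stmt9 {N p q : ℕ} (A : (Fin N → ℂ) → Matrix (Fin p) (Fin q) ℂ)
    (U : Set (Fin N → ℂ)) (hU : IsOpen U) (hUc : IsConnected U)
    (hA : ∀ i j, AnalyticOnNhd ℂ (fun x => A x i j) U)
    (r : ℕ) (hr : ∀ x ∈ U, (A x).rank ≤ r) (hmax : ∃ x ∈ U, (A x).rank = r) :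
    IsClosed ((Subtype.val ⁻¹' {x | (A x).rank < r}) : Set U) ∧
    interior {x | x ∈ U ∧ (A x).rank < r} = ∅ :=
  stmt9_general A U hUc hA r hmax
end
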